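/- If 𝔽 and 𝔊 are maximal closed generalized flags in V whose stabilizers in 𝔰𝔩(V,V_*) satisfy St_𝔽 ⊆ St_𝔊, then 𝔽 = 𝔊. -/

import Mathlib

open TensorProduct

/-- The perpendicular complement of a subspace with respect to a pairing. -/
def perp {X Y : Type*} [AddCommGroup X] [Module ℂ X] [AddCommGroup Y] [Module ℂ Y]
    (B : X →ₗ[ℂ] Y →ₗ[ℂ] ℂ) (F : Submodule ℂ X) : Submodule ℂ Y where
  carrier := {y | ∀ x ∈ F, B x y = 0}
  add_mem' := by intro a b ha hb x hx; simp [map_add, ha x hx, hb x hx]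
  zero_mem' := by intro x hx; simp
  smul_mem' := by intro c a ha x hx; simp [ha x hx]

/-- The closure of a subspace of `V` with respect to the pairing:
its double perpendicular complement. -/
def clos {X Y : Type*} [AddCommGroup X] [Module ℂ X] [AddCommGroup Y] [Module ℂ Y]
    (B : X →ₗ[ℂ] Y →ₗ[ℂ] ℂ) (F : Submodule ℂ X) : Submodule ℂ X :=
  perp B.flip (perp B F)

/-- `F` and `G` form an immediate predecessor-successor pair of the chain `C`. -/
def ImmPair {V : Type*} [AddCommGroup V] [Module ℂ V]
    (C : Set (Submodule ℂ V)) (F G : Submodule ℂ V) : Prop :=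
  F ∈ C ∧ G ∈ C ∧ F < G ∧ ∀ H ∈ C, ¬(F < H ∧ H < G)

/-- A generalized flag in `V`. -/
structure GenFlag (V : Type*) [AddCommGroup V] [Module ℂ V] where
  carrier : Set (Submodule ℂ V)
  chain : IsChain (· ≤ ·) carrier
  neighbor : ∀ F ∈ carrier,
    (∃ G, ImmPair carrier G F) ∨ (∃ G, ImmPair carrier F G)
  covers : ∀ x : V, x ≠ 0 → ∃ F G, ImmPair carrier F G ∧ x ∈ G ∧ x ∉ F

/-- A closed generalized flag: every immediate successor is closed, and the
closure of every immediate predecessor is either itself or its successor. -/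
def GenFlag.IsClosed {V Y : Type*} [AddCommGroup V] [Module ℂ V]
    [AddCommGroup Y] [Module ℂ Y] (B : V →ₗ[ℂ] Y →ₗ[ℂ] ℂ) (𝔽 : GenFlag V) : Prop :=
  ∀ F G : Submodule ℂ V, ImmPair 𝔽.carrier F G →
    clos B G = G ∧ (clos B F = F ∨ clos B F = G)

/-- A good pair of a closed generalized flag: an immediate
predecessor-successor pair whose predecessor is closed. -/
def GoodPair {V Y : Type*} [AddCommGroup V] [Module ℂ V]
    [AddCommGroup Y] [Module ℂ Y] (B : V →ₗ[ℂ] Y →ₗ[ℂ] ℂ)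
    (C : Set (Submodule ℂ V)) (F G : Submodule ℂ V) : Prop :=
  ImmPair C F G ∧ clos B F = F

/-- A maximal closed generalized flag: a closed generalized flag in which
every good pair has codimension one. -/
def GenFlag.IsMaxClosed {V Y : Type*} [AddCommGroup V] [Module ℂ V]
    [AddCommGroup Y] [Module ℂ Y] (B : V →ₗ[ℂ] Y →ₗ[ℂ] ℂ) (𝔽 : GenFlag V) : Prop :=
  𝔽.IsClosed B ∧ ∀ F G : Submodule ℂ V, GoodPair B 𝔽.carrier F G →
    Module.rank ℂ (↥G ⧸ (F.comap G.subtype)) = 1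

/-- The action of `𝔤𝔩(V,V_*) = V ⊗ V_*` on `V`: `(v ⊗ w) · u = ⟨u, w⟩ v`. -/
noncomputable def toEnd {V W : Type*} [AddCommGroup V] [Module ℂ V]
    [AddCommGroup W] [Module ℂ W] (B : V →ₗ[ℂ] W →ₗ[ℂ] ℂ) :
    V ⊗[ℂ] W →ₗ[ℂ] Module.End ℂ V :=
  TensorProduct.lift <| LinearMap.mk₂ ℂ (fun v w => (B.flip w).smulRight v)
    (fun v v' w => by ext u; simp)
    (fun c v w => by ext u; exact smul_comm _ _ _)
    (fun v w w' => by ext u; simp [add_smul])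
    (fun c v w => by ext u; simp [smul_smul, mul_comm])

attribute [local instance 100] LieRing.ofAssociativeRing

/-- `𝔰𝔩(V,V_*)`, the commutator subalgebra `[𝔤𝔩(V,V_*), 𝔤𝔩(V,V_*)]` of
`𝔤𝔩(V,V_*) = V ⊗ V_*`, realized inside `End V`: the Lie subalgebra generated
by brackets of elements of `V ⊗ V_*`. -/
noncomputable def slB {V W : Type*} [AddCommGroup V] [Module ℂ V]
    [AddCommGroup W] [Module ℂ W] (B : V →ₗ[ℂ] W →ₗ[ℂ] ℂ) :
    LieSubalgebra ℂ (Module.End ℂ V) :=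
  LieSubalgebra.lieSpan ℂ (Module.End ℂ V)
    {z | ∃ t s : V ⊗[ℂ] W, z = ⁅toEnd B t, toEnd B s⁆}

/-- The stabilizer in `𝔰𝔩(V,V_*)` of a family `C` of subspaces of `V`,
as a subset of `End V`. -/
noncomputable def slStab {V W : Type*} [AddCommGroup V] [Module ℂ V]
    [AddCommGroup W] [Module ℂ W] (B : V →ₗ[ℂ] W →ₗ[ℂ] ℂ)
    (C : Set (Submodule ℂ V)) : Set (Module.End ℂ V) :=
  {f | f ∈ slB B ∧ ∀ F ∈ C, ∀ x ∈ F, f x ∈ F}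

/-!
Every member `U` of `𝔊` is `St_𝔽`-invariant, and this forces `U` to be comparable with every
member `F₀` of `𝔽`: otherwise pick `x ∈ U \ F₀` and `y ∈ F₀ \ U`; as `F₀` contains a closed
successor `G ∋ y` of `𝔽`, some `w ∈ G^⊥` has `⟨x, w⟩ ≠ 0`, and the rank-one operator `y ⊗ w` lies
in `St_𝔽` and sends `x` to a nonzero multiple of `y`. So `𝔽 ∪ 𝔊` is a chain. No member of one flag
lies strictly inside a gap `F < G` of the other: if `F` is closed the gap has codimension one, and
otherwise `G = F^⊥⊥` is the closure of every intermediate closed subspace. Hence the immediate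
pairs of both flags are immediate pairs of the chain `𝔽 ∪ 𝔊`, where the pair whose difference
contains a given vector is unique.
-/

section Pairing

variable {X Y : Type*} [AddCommGroup X] [Module ℂ X] [AddCommGroup Y] [Module ℂ Y]
  (B : X →ₗ[ℂ] Y →ₗ[ℂ] ℂ)

theorem perp_antitone {S T : Submodule ℂ X} (h : S ≤ T) : perp B T ≤ perp B S :=
  fun _ hy x hx => hy x (h hx)

theorem clos_mono {S T : Submodule ℂ X} (h : S ≤ T) : clos B S ≤ clos B T :=
  perp_antitone B.flip (perp_antitone B h)

end Pairing

theorem covBy_of_rank_quotient_eq_one {K M : Type*} [DivisionRing K] [AddCommGroup M]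
    [Module K M] {F G : Submodule K M} (hle : F ≤ G)
    (h : Module.rank K (↥G ⧸ F.comap G.subtype) = 1) : F ⋖ G :=
  (covBy_iff_quot_is_simple hle).2 <|
    isSimpleModule_iff_finrank_eq_one.2 (Module.rank_eq_one_iff_finrank_eq_one.1 h)

section Flags

variable {V : Type*} [AddCommGroup V] [Module ℂ V]

theorem ImmPair.le_of_mem {C : Set (Submodule ℂ V)} (hC : IsChain (· ≤ ·) C)
    {F G M : Submodule ℂ V} (hFG : ImmPair C F G) {y : V} (hyF : y ∉ F)
    (hM : M ∈ C) (hyM : y ∈ M) : G ≤ M := by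
  have hFM : F < M := by
    refine lt_of_le_of_ne ((hC.total hFG.1 hM).resolve_right fun h => hyF (h hyM)) ?_
    rintro rfl
    exact hyF hyM
  rcases hC.total hM hFG.2.1 with hMG | hGM
  · exact (eq_of_le_of_not_lt hMG fun hlt => hFG.2.2.2 M hM ⟨hFM, hlt⟩).ge
  · exact hGM

theorem ImmPair.eq_of_mem {C : Set (Submodule ℂ V)} (hC : IsChain (· ≤ ·) C)
    {P S P' S' : Submodule ℂ V} (h : ImmPair C P S) (h' : ImmPair C P' S') {x : V}
    (hxS : x ∈ S) (hxP : x ∉ P) (hxS' : x ∈ S') (hxP' : x ∉ P') : P = P' ∧ S = S' := by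
  have hS : S = S' := le_antisymm (h.le_of_mem hC hxP h'.2.1 hxS')
    (h'.le_of_mem hC hxP' h.2.1 hxS)
  subst hS
  refine ⟨?_, rfl⟩
  rcases hC.total h.1 h'.1 with hle | hle
  · exact eq_of_le_of_not_lt hle fun hlt => h.2.2.2 P' h'.1 ⟨hlt, h'.2.2.1⟩
  · exact (eq_of_le_of_not_lt hle fun hlt => h'.2.2.2 P h.1 ⟨hlt, h.2.2.1⟩).symm

theorem GenFlag.ext {𝔽 𝔊 : GenFlag V} (h : 𝔽.carrier = 𝔊.carrier) : 𝔽 = 𝔊 := by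
  cases 𝔽
  cases 𝔊
  subst h
  rfl

theorem GenFlag.carrier_subset_of_immPair {𝔽 𝔊 : GenFlag V} {C : Set (Submodule ℂ V)}
    (hC : IsChain (· ≤ ·) C) (h𝔽 : ∀ F G, ImmPair 𝔽.carrier F G → ImmPair C F G)
    (h𝔊 : ∀ F G, ImmPair 𝔊.carrier F G → ImmPair C F G) : 𝔽.carrier ⊆ 𝔊.carrier := by
  intro F₀ hF₀
  obtain ⟨P, S, hPS, hF₀PS⟩ : ∃ P S, ImmPair 𝔽.carrier P S ∧ (F₀ = P ∨ F₀ = S) := by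
    rcases 𝔽.neighbor F₀ hF₀ with ⟨P, hP⟩ | ⟨S, hS⟩
    exacts [⟨P, F₀, hP, .inr rfl⟩, ⟨F₀, S, hS, .inl rfl⟩]
  obtain ⟨x, hxS, hxP⟩ := SetLike.exists_of_lt hPS.2.2.1
  obtain ⟨P', S', hPS', hxS', hxP'⟩ := 𝔊.covers x (by rintro rfl; exact hxP P.zero_mem)
  obtain ⟨rfl, rfl⟩ := (h𝔽 P S hPS).eq_of_mem hC (h𝔊 P' S' hPS') hxS hxP hxS' hxP'
  rcases hF₀PS with rfl | rfl
  exacts [hPS'.1, hPS'.2.1]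

variable {W : Type*} [AddCommGroup W] [Module ℂ W] {B : V →ₗ[ℂ] W →ₗ[ℂ] ℂ}

theorem GenFlag.IsMaxClosed.immPair_union {𝔽 𝔊 : GenFlag V} (h𝔽 : 𝔽.IsMaxClosed B)
    (h𝔊 : 𝔊.IsClosed B) (hC : IsChain (· ≤ ·) (𝔽.carrier ∪ 𝔊.carrier))
    {F G : Submodule ℂ V} (hFG : ImmPair 𝔽.carrier F G) :
    ImmPair (𝔽.carrier ∪ 𝔊.carrier) F G := by
  refine ⟨.inl hFG.1, .inl hFG.2.1, hFG.2.2.1, ?_⟩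
  rintro U (hU | hU) ⟨hFU, hUG⟩
  · exact hFG.2.2.2 U hU ⟨hFU, hUG⟩
  rcases (h𝔽.1 F G hFG).2 with hF | hF
  · exact (covBy_of_rank_quotient_eq_one hFG.2.2.1.le (h𝔽.2 F G ⟨hFG, hF⟩)).2 hFU hUG
  obtain ⟨x, hxU, hxF⟩ := SetLike.exists_of_lt hFU
  obtain ⟨F', G', hFG', hxG', hxF'⟩ := 𝔊.covers x (by rintro rfl; exact hxF F.zero_mem)
  have hG'U : G' ≤ U := hFG'.le_of_mem 𝔊.chain hxF' hU hxU
  have hFleG' : F ≤ G' :=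
    (hC.total (.inl hFG.1) (.inr hFG'.2.1)).resolve_right fun h => hxF (h hxG')
  -- `G` is the closure of `F`, hence lies in every closed subspace containing `F`
  have hGG' : G ≤ G' := hF ▸ (h𝔊 F' G' hFG').1 ▸ clos_mono B hFleG'
  exact hUG.not_ge (hGG'.trans hG'U)

end Flags

section Stabilizer

variable {V W : Type*} [AddCommGroup V] [Module ℂ V] [AddCommGroup W] [Module ℂ W]
  (B : V →ₗ[ℂ] W →ₗ[ℂ] ℂ)

theorem toEnd_tmul (v : V) (w : W) (u : V) : toEnd B (v ⊗ₜ[ℂ] w) u = B u w • v := by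
  simp [toEnd]

/-- When `⟨y, w⟩ = 0`, the operator `y ⊗ w` is the commutator of `y ⊗ w₀` and
`⟨y, w₀⟩⁻¹ y ⊗ w`. -/
theorem toEnd_tmul_mem_slB {y : V} {w w₀ : W} (hyw : B y w = 0) (hyw₀ : B y w₀ ≠ 0) :
    toEnd B (y ⊗ₜ[ℂ] w) ∈ slB B := by
  apply LieSubalgebra.subset_lieSpan
  refine ⟨y ⊗ₜ w₀, ((B y w₀)⁻¹ • y) ⊗ₜ w, ?_⟩
  ext u
  simp [Ring.lie_def, toEnd_tmul, smul_smul, hyw, inv_mul_cancel_right₀ hyw₀]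

theorem toEnd_tmul_mapsTo {C : Set (Submodule ℂ V)} (hC : IsChain (· ≤ ·) C)
    {G : Submodule ℂ V} (hG : G ∈ C) {y : V} (hy : y ∈ G) {w : W} (hw : w ∈ perp B G) :
    ∀ F ∈ C, ∀ x ∈ F, toEnd B (y ⊗ₜ[ℂ] w) x ∈ F := by
  intro F hF x hx
  rw [toEnd_tmul]
  by_cases hyF : y ∈ F
  · exact F.smul_mem _ hyF
  · have hFG : F ≤ G := (hC.total hF hG).resolve_right fun h => hyF (h hy)
    rw [hw x (hFG hx), zero_smul]
    exact F.zero_mem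

theorem GenFlag.le_or_ge_of_slStab_invariant (hB : ∀ v : V, (∀ w : W, B v w = 0) → v = 0)
    {𝔽 : GenFlag V} (h𝔽 : 𝔽.IsClosed B) {U : Submodule ℂ V}
    (hU : ∀ f ∈ slStab B 𝔽.carrier, ∀ x ∈ U, f x ∈ U)
    {F₀ : Submodule ℂ V} (hF₀ : F₀ ∈ 𝔽.carrier) : U ≤ F₀ ∨ F₀ ≤ U := by
  by_contra! ⟨hUF₀, hF₀U⟩
  obtain ⟨x, hxU, hxF₀⟩ := SetLike.not_le_iff_exists.mp hUF₀
  obtain ⟨y, hyF₀, hyU⟩ := SetLike.not_le_iff_exists.mp hF₀U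
  have hy : y ≠ 0 := by rintro rfl; exact hyU U.zero_mem
  obtain ⟨w₀, hyw₀⟩ : ∃ w₀, B y w₀ ≠ 0 := by
    by_contra! h
    exact hy (hB y h)
  obtain ⟨F, G, hFG, hyG, hyF⟩ := 𝔽.covers y hy
  have hxG : x ∉ clos B G := by
    rw [(h𝔽 F G hFG).1]
    exact fun hxG => hxF₀ (hFG.le_of_mem 𝔽.chain hyF hF₀ hyF₀ hxG)
  obtain ⟨w, hwG, hxw⟩ : ∃ w ∈ perp B G, B x w ≠ 0 := by
    by_contra! h
    exact hxG h
  have hf : toEnd B (y ⊗ₜ[ℂ] w) ∈ slStab B 𝔽.carrier :=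
    ⟨toEnd_tmul_mem_slB B (hwG y hyG) hyw₀, toEnd_tmul_mapsTo B 𝔽.chain hFG.2.1 hyG hwG⟩
  have hxy := U.smul_mem (B x w)⁻¹ (hU _ hf x hxU)
  rw [toEnd_tmul, smul_smul, inv_mul_cancel₀ hxw, one_smul] at hxy
  exact hyU hxy

end Stabilizer

theorem maxClosedFlag_eq_of_slStab_le_general {V W : Type*} [AddCommGroup V] [Module ℂ V]
    [AddCommGroup W] [Module ℂ W]
    (B : V →ₗ[ℂ] W →ₗ[ℂ] ℂ)
    (hB₁ : ∀ v : V, (∀ w : W, B v w = 0) → v = 0)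
    (𝔽 𝔊 : GenFlag V) (h𝔽 : 𝔽.IsMaxClosed B) (h𝔊 : 𝔊.IsMaxClosed B)
    (hst : slStab B 𝔽.carrier ⊆ slStab B 𝔊.carrier) :
    𝔽 = 𝔊 := by
  have hC : IsChain (· ≤ ·) (𝔽.carrier ∪ 𝔊.carrier) := by
    refine isChain_union.2 ⟨𝔽.chain, 𝔊.chain, fun F hF U hU _ => ?_⟩
    exact (GenFlag.le_or_ge_of_slStab_invariant B hB₁ h𝔽.1
      (fun f hf => (hst hf).2 U hU) hF).symm
  have hC' : IsChain (· ≤ ·) (𝔊.carrier ∪ 𝔽.carrier) := Set.union_comm 𝔽.carrier _ ▸ hC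
  have h𝔽C : ∀ F G, ImmPair 𝔽.carrier F G → ImmPair (𝔽.carrier ∪ 𝔊.carrier) F G :=
    fun _ _ => h𝔽.immPair_union h𝔊.1 hC
  have h𝔊C : ∀ F G, ImmPair 𝔊.carrier F G → ImmPair (𝔽.carrier ∪ 𝔊.carrier) F G :=
    fun _ _ hFG => Set.union_comm 𝔊.carrier _ ▸ h𝔊.immPair_union h𝔽.1 hC' hFG
  exact GenFlag.ext <| subset_antisymm (GenFlag.carrier_subset_of_immPair hC h𝔽C h𝔊C)
    (GenFlag.carrier_subset_of_immPair hC h𝔊C h𝔽C)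

/-- if `𝔽` and `𝔊` are maximal closed generalized flags in `V`
whose stabilizers in `𝔰𝔩(V,V_*)` satisfy `St_𝔽 ⊆ St_𝔊`, then `𝔽 = 𝔊`. -/
theorem maxClosedFlag_eq_of_slStab_le {V W : Type*} [AddCommGroup V] [Module ℂ V]
    [AddCommGroup W] [Module ℂ W]
    (hV : Module.rank ℂ V ≤ Cardinal.aleph0)
    (hW : Module.rank ℂ W ≤ Cardinal.aleph0)
    (B : V →ₗ[ℂ] W →ₗ[ℂ] ℂ)
    (hB₁ : ∀ v : V, (∀ w : W, B v w = 0) → v = 0)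
    (hB₂ : ∀ w : W, (∀ v : V, B v w = 0) → w = 0)
    (𝔽 𝔊 : GenFlag V) (h𝔽 : 𝔽.IsMaxClosed B) (h𝔊 : 𝔊.IsMaxClosed B)
    (hst : slStab B 𝔽.carrier ⊆ slStab B 𝔊.carrier) :
    𝔽 = 𝔊 :=
  maxClosedFlag_eq_of_slStab_le_general B hB₁ 𝔽 𝔊 h𝔽 h𝔊 hst
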